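/- arXiv:1007.5395 — 10 statements merged into one kernel-verified Lean document; each statement's English description precedes it below -/
import Mathlib

section
/- Let A be a unital commutative C*-algebra and δ : A → A a star-algebra endomorphism. Then the image of the map α dual to δ (defined on the clopen set Δ = {x ∈ M(A) : x(δ(1)) ≠ 0} of the maximal ideal space by α = δ*|_Δ) is an open subset of M(A) if and only if the kernel of δ is a unital ideal (i.e., ker δ has a multiplicative unit). -/
open Classical

/-!
The map `δ` kills exactly the functions vanishing on the compact set `K = range α`, so `ker δ` is
the ideal of functions supported in the open set `U = Kᶜ`. That ideal has a unit iff `U` is also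
closed: the indicator of a clopen `U` is a unit, and conversely a unit `e` must equal `1` at each
`x ∈ U` (test it against an Urysohn function vanishing off `U` with value `1` at `x`) and `0` off
`U`, so `U = e⁻¹' {1}` is closed.
-/

open ContinuousMap

section idealOfSet

variable {X : Type*} [TopologicalSpace X]

theorem ContinuousMap.exists_unit_idealOfSet_of_isClopen {R : Type*} [Semiring R]
    [TopologicalSpace R] [IsTopologicalSemiring R] {U : Set X} (hU : IsClopen U) :
    ∃ e ∈ idealOfSet R U, ∀ a ∈ idealOfSet R U, e * a = a := by
  refine ⟨⟨U.indicator 1, hU.continuous_indicator continuous_const⟩,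
    fun x hx => Set.indicator_of_notMem hx _, fun a ha => ?_⟩
  ext x
  by_cases hx : x ∈ U
  · simp [hx]
  · simp [hx, ha x hx]

theorem ContinuousMap.isClosed_of_exists_unit_idealOfSet {𝕜 : Type*} [RCLike 𝕜]
    [CompletelyRegularSpace X] {U : Set X} (hU : IsOpen U)
    (h : ∃ e ∈ idealOfSet 𝕜 U, ∀ a ∈ idealOfSet 𝕜 U, e * a = a) : IsClosed U := by
  obtain ⟨e, he, hunit⟩ := h
  have he_one : ∀ x ∈ U, e x = 1 := by
    intro x hx
    obtain ⟨f, hf, hfx, hfU⟩ := completelyRegularSpace_iff_isOpen.mp ‹_› x U hU hx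
    let a : C(X, 𝕜) := ⟨fun y => ((1 - f y : ℝ) : 𝕜), by fun_prop⟩
    have ha : a ∈ idealOfSet 𝕜 U := fun y hy => by simp [a, hfU hy]
    have hax : a x = 1 := by simp [a, hfx]
    simpa [hax] using congrArg (· x) (hunit a ha)
  have : U = e ⁻¹' {1} := by
    ext x
    by_cases hx : x ∈ U
    · simp [hx, he_one x hx]
    · simp [hx, he x hx]
  exact this ▸ isClosed_singleton.preimage e.continuous

theorem ContinuousMap.isClosed_iff_exists_unit_idealOfSet {𝕜 : Type*} [RCLike 𝕜]
    [CompletelyRegularSpace X] {U : Set X} (hU : IsOpen U) :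
    IsClosed U ↔ ∃ e ∈ idealOfSet 𝕜 U, ∀ a ∈ idealOfSet 𝕜 U, e * a = a :=
  ⟨fun hU' => exists_unit_idealOfSet_of_isClopen ⟨hU', hU⟩,
    isClosed_of_exists_unit_idealOfSet hU⟩

end idealOfSet

theorem eq_zero_iff_mem_idealOfSet_compl_range {M R : Type*} [TopologicalSpace M] [Semiring R]
    [TopologicalSpace R] [IsTopologicalSemiring R] {Δ : Set M} (α : C(Δ, M))
    {δ : C(M, R) → C(M, R)}
    (hδ : ∀ (a : C(M, R)) (x : M), δ a x = if h : x ∈ Δ then a (α ⟨x, h⟩) else 0)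
    (a : C(M, R)) : δ a = 0 ↔ a ∈ idealOfSet R (Set.range α)ᶜ := by
  simp only [mem_idealOfSet, compl_compl, Set.forall_mem_range]
  constructor
  · intro ha x
    simpa [hδ, x.2] using congrArg (· x) ha
  · intro ha
    ext x
    by_cases hx : x ∈ Δ
    · simp [hδ, hx, ha]
    · simp [hδ, hx]

/-- For a unital commutative C*-algebra `A = C(M, ℂ)` (M compact Hausdorff) and an
endomorphism `δ` given by a clopen set `Δ ⊆ M` and a continuous map `α : Δ → M` via
`δ(a)(x) = a(α x)` for `x ∈ Δ` and `0` otherwise, the image of `α` is open iff `ker δ` is a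
unital ideal. -/
theorem stmt0 {M : Type*} [TopologicalSpace M] [CompactSpace M] [T2Space M]
    (Δ : Set M) (hΔ : IsClopen Δ) (α : C(Δ, M))
    (δ : C(M, ℂ) → C(M, ℂ))
    (hδ : ∀ (a : C(M, ℂ)) (x : M), δ a x = if h : x ∈ Δ then a (α ⟨x, h⟩) else 0) :
    IsOpen (Set.range (fun x : Δ => α x)) ↔
      ∃ e : C(M, ℂ), δ e = 0 ∧ ∀ a : C(M, ℂ), δ a = 0 → e * a = a := by
  have : CompactSpace Δ := isCompact_iff_compactSpace.mp hΔ.isClosed.isCompact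
  have hK : IsClosed (Set.range α) := (isCompact_range α.continuous).isClosed
  simp only [eq_zero_iff_mem_idealOfSet_compl_range α hδ]
  rw [← isClosed_compl_iff]
  exact isClosed_iff_exists_unit_idealOfSet hK.isOpen_compl
end

section
/- Let A be a unital commutative C*-algebra with maximal ideal space M, δ : A → A an endomorphism with dual map α : Δ → M. Then δ is a partial automorphism (i.e., ker δ is unital and δ(A) is an ideal in A) if and only if α(Δ) is clopen in M and α : Δ → α(Δ) is a homeomorphism. -/
/-!
The kernel of `δ` is the ideal of functions vanishing on the closed set `α(Δ)`, and by complete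
regularity such an ideal has a unit exactly when `α(Δ)` is open. The relation `b * δ a = δ c`
says `b = c ∘ α` on `Δ`: with `a = 1` every `b` is constant on the fibres of `α`, so `α` is
injective, hence a closed embedding by compactness; conversely, for a closed embedding `α`, Tietze
extends `b ∘ α⁻¹` from `α(Δ)` to a function `g` on `M`, and `c = g * a` works.
-/

open Classical Set Topology

theorem isEmbedding_iff_exists_homeomorph_range {X Y : Type*} [TopologicalSpace X]
    [TopologicalSpace Y] {f : X → Y} :
    IsEmbedding f ↔ ∃ h : X ≃ₜ range f, ∀ x, (h x : Y) = f x := by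
  refine ⟨fun hf => ⟨hf.toHomeomorph, fun x => rfl⟩, fun ⟨h, hh⟩ => ?_⟩
  have : f = Subtype.val ∘ h := funext fun x => (hh x).symm
  exact this ▸ IsEmbedding.subtypeVal.comp h.isEmbedding

theorem CompletelyRegularSpace.exists_continuousMap_complex {X : Type*} [TopologicalSpace X]
    [CompletelyRegularSpace X] {x : X} {K : Set X} (hK : IsClosed K) (hx : x ∉ K) :
    ∃ f : C(X, ℂ), f x = 1 ∧ EqOn f 0 K := by
  obtain ⟨f, hf, hfx, hfK⟩ := CompletelyRegularSpace.completely_regular x K hK hx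
  refine ⟨⟨fun y => 1 - ((f y : ℝ) : ℂ), by fun_prop⟩, by simp [hfx], fun y hy => ?_⟩
  simp [hfK hy]

theorem eq_of_forall_continuousMap_complex_apply_eq {X : Type*} [TopologicalSpace X]
    [CompletelyRegularSpace X] [T1Space X] {x y : X} (h : ∀ b : C(X, ℂ), b x = b y) : x = y := by
  by_contra hne
  obtain ⟨b, hbx, hby⟩ :=
    CompletelyRegularSpace.exists_continuousMap_complex (isClosed_singleton (x := y)) hne
  simpa [hbx, hby rfl] using h b

theorem exists_mul_eq_self_of_eqOn_zero_iff_isOpen {X : Type*} [TopologicalSpace X]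
    [CompletelyRegularSpace X] {S : Set X} (hS : IsClosed S) :
    (∃ e : C(X, ℂ), EqOn e 0 S ∧ ∀ a : C(X, ℂ), EqOn a 0 S → e * a = a) ↔ IsOpen S := by
  constructor
  · rintro ⟨e, he0, he⟩
    suffices S = e ⁻¹' {1}ᶜ from this ▸ (isClosed_singleton.preimage e.continuous).isOpen_compl
    ext z
    refine ⟨fun hz => by simp [he0 hz], fun hz => ?_⟩
    by_contra hzS
    obtain ⟨a, haz, ha0⟩ := CompletelyRegularSpace.exists_continuousMap_complex hS hzS
    have hez : e z * a z = a z := congr($(he a ha0) z)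
    rw [haz, mul_one] at hez
    exact hz hez
  · intro hSo
    refine ⟨⟨Sᶜ.indicator 1, (IsClopen.compl ⟨hS, hSo⟩).continuous_indicator continuous_const⟩,
      fun z hz => by simp [hz], fun a ha => ?_⟩
    ext z
    by_cases hz : z ∈ S
    · simp [ha hz]
    · simp [hz]

def HasDualData {M : Type*} [TopologicalSpace M] (δ : C(M, ℂ) → C(M, ℂ)) (Δ : Set M)
    (α : C(Δ, M)) : Prop :=
  ∀ (a : C(M, ℂ)) (x : M), δ a x = if h : x ∈ Δ then a (α ⟨x, h⟩) else 0

namespace HasDualData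

variable {M : Type*} [TopologicalSpace M] {δ : C(M, ℂ) → C(M, ℂ)} {Δ : Set M} {α : C(Δ, M)}

theorem apply_coe (hδ : HasDualData δ Δ α) (a : C(M, ℂ)) (x : Δ) : δ a x = a (α x) := by
  rw [hδ, dif_pos x.2]

theorem eq_zero_iff (hδ : HasDualData δ Δ α) {a : C(M, ℂ)} : δ a = 0 ↔ EqOn a 0 (range α) := by
  refine ⟨fun ha => ?_, fun ha => ?_⟩
  · rintro _ ⟨x, rfl⟩
    simpa [hδ.apply_coe] using congr($ha x)
  · ext x
    rw [hδ]
    split_ifs with hx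
    · exact ha (mem_range_self _)
    · rfl

theorem mul_eq_iff (hδ : HasDualData δ Δ α) {a b c : C(M, ℂ)} :
    b * δ a = δ c ↔ ∀ x : Δ, b x * a (α x) = c (α x) := by
  refine ⟨fun h x => by simpa [hδ.apply_coe] using congr($h x), fun h => ?_⟩
  ext x
  rw [ContinuousMap.mul_apply, hδ, hδ]
  split_ifs with hx
  · exact h ⟨x, hx⟩
  · rw [mul_zero]

theorem exists_unit_ker_iff_isOpen [CompletelyRegularSpace M] (hδ : HasDualData δ Δ α)
    (hS : IsClosed (range α)) :
    (∃ e : C(M, ℂ), δ e = 0 ∧ ∀ a : C(M, ℂ), δ a = 0 → e * a = a) ↔ IsOpen (range α) := by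
  simp only [hδ.eq_zero_iff]
  exact exists_mul_eq_self_of_eqOn_zero_iff_isOpen hS

theorem injective_of_mul_mem_range [CompletelyRegularSpace M] [T1Space M]
    (hδ : HasDualData δ Δ α) (hideal : ∀ a b : C(M, ℂ), ∃ c : C(M, ℂ), b * δ a = δ c) :
    Function.Injective α := by
  intro x₁ x₂ hx
  refine Subtype.ext (eq_of_forall_continuousMap_complex_apply_eq fun b => ?_)
  obtain ⟨c, hc⟩ := hideal 1 b
  have hbc : ∀ x : Δ, b x = c (α x) := by simpa using hδ.mul_eq_iff.mp hc
  rw [hbc, hbc, hx]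

theorem mul_mem_range_of_isClosedEmbedding [NormalSpace M] (hδ : HasDualData δ Δ α)
    (hα : IsClosedEmbedding α) (a b : C(M, ℂ)) : ∃ c : C(M, ℂ), b * δ a = δ c := by
  obtain ⟨g, hg⟩ := (b.restrict Δ).exists_extension' hα
  refine ⟨g * a, hδ.mul_eq_iff.mpr fun x => ?_⟩
  have hgx : g (α x) = b x := congr_fun hg x
  rw [ContinuousMap.mul_apply, hgx]

theorem mul_mem_range_iff_isClosedEmbedding [T4Space M] [CompactSpace Δ]
    (hδ : HasDualData δ Δ α) :
    (∀ a b : C(M, ℂ), ∃ c : C(M, ℂ), b * δ a = δ c) ↔ IsClosedEmbedding α :=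
  ⟨fun h => α.continuous.isClosedEmbedding (hδ.injective_of_mul_mem_range h),
    hδ.mul_mem_range_of_isClosedEmbedding⟩

end HasDualData

/-- `δ` (given by clopen `Δ` and continuous `α : Δ → M`) is a partial automorphism
(unital kernel and image an ideal) iff `α(Δ)` is clopen and `α : Δ → α(Δ)` is a homeomorphism. -/
theorem stmt1 {M : Type*} [TopologicalSpace M] [CompactSpace M] [T2Space M]
    (Δ : Set M) (hΔ : IsClopen Δ) (α : C(Δ, M))
    (δ : C(M, ℂ) → C(M, ℂ))
    (hδ : ∀ (a : C(M, ℂ)) (x : M), δ a x = if h : x ∈ Δ then a (α ⟨x, h⟩) else 0) :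
    ((∃ e : C(M, ℂ), δ e = 0 ∧ ∀ a : C(M, ℂ), δ a = 0 → e * a = a) ∧
      (∀ a b : C(M, ℂ), ∃ c : C(M, ℂ), b * δ a = δ c)) ↔
    (IsClopen (Set.range (fun x : Δ => α x)) ∧
      ∃ h : Δ ≃ₜ (Set.range (fun x : Δ => α x)), ∀ x : Δ, (h x : M) = α x) := by
  have hδ : HasDualData δ Δ α := hδ
  have : CompactSpace Δ := isCompact_iff_compactSpace.mp hΔ.isClosed.isCompact
  have hS : IsClosed (range α) := (isCompact_range α.continuous).isClosed
  rw [hδ.exists_unit_ker_iff_isOpen hS, hδ.mul_mem_range_iff_isClosedEmbedding,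
    isClosedEmbedding_iff, ← isEmbedding_iff_exists_homeomorph_range]
  exact ⟨fun ⟨hSo, hα, _⟩ => ⟨⟨hS, hSo⟩, hα⟩, fun ⟨hSc, hα⟩ => ⟨hSc.isOpen, hα, hS⟩⟩
end

section
/- If δ : A → A is a partial automorphism of a unital commutative C*-algebra A, then there is a unique partial automorphism δ* : A → A that is a generalized inverse of δ, i.e., satisfying δ ∘ δ* ∘ δ = δ and δ* ∘ δ ∘ δ* = δ*. -/
/-- A partial automorphism of a commutative C*-algebra: a *-endomorphism whose kernel is a
unital ideal and whose range is an ideal. -/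
def IsPartialAut {A : Type*} [NormedCommRing A] [NormedAlgebra ℂ A] [StarRing A]
    (δ : A →⋆ₙₐ[ℂ] A) : Prop :=
  (∃ e : A, δ e = 0 ∧ ∀ a : A, δ a = 0 → e * a = a) ∧
  (∀ a b : A, ∃ c : A, b * δ a = δ c)

set_option maxHeartbeats 2000000 in
/-- a partial automorphism `δ` of a unital commutative C*-algebra has a unique
generalized inverse which is again a partial automorphism. -/
theorem stmt2 {A : Type*} [NormedCommRing A] [NormedAlgebra ℂ A] [StarRing A]
    [CStarRing A] [CompleteSpace A] [StarModule ℂ A] [NormOneClass A]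
    (δ : A →⋆ₙₐ[ℂ] A) (hδ : IsPartialAut δ) :
    ∃! δs : A →⋆ₙₐ[ℂ] A, IsPartialAut δs ∧
      (∀ a : A, δ (δs (δ a)) = δ a) ∧ (∀ a : A, δs (δ (δs a)) = δs a) := by
  classical
  obtain ⟨⟨e, he0, heu⟩, hrange⟩ := hδ
  have hee : e * e = e := heu e he0
  have hes : star e = e := by
    have h1 : δ (star e) = 0 := by rw [map_star, he0, star_zero]
    have h2 : e * star e = star e := heu _ h1
    have h3 : e * star e = e := by
      have := congrArg star h2
      rwa [star_mul, star_star] at this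
    exact h2.symm.trans h3
  set p : A := 1 - e with hpdef
  have hpp : p * p = p := by
    simp only [hpdef, sub_mul, mul_sub, mul_one, one_mul, hee]; ring
  have hpe : p * e = 0 := by simp only [hpdef, sub_mul, one_mul, hee, sub_self]
  have hps : star p = p := by simp [hpdef, hes]
  have hstar : ∀ x : A, p * x = x → p * star x = star x := by
    intro x hx
    have := congrArg star hx
    rwa [star_mul, hps, mul_comm] at this
  have hδp : ∀ a : A, δ (p * a) = δ a := by
    intro a
    have : p * a = a - e * a := by ring
    rw [this, map_sub, map_mul, he0, zero_mul, sub_zero]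
  -- injectivity of δ on p * A
  have hinj : ∀ x y : A, p * x = x → p * y = y → δ x = δ y → x = y := by
    intro x y hx hy hxy
    have h0 : δ (x - y) = 0 := by rw [map_sub, hxy, sub_self]
    have h1 : e * (x - y) = x - y := heu _ h0
    have h2 : p * (x - y) = x - y := by rw [mul_sub, hx, hy]
    have h3 : x - y = 0 := by
      calc x - y = p * (e * (x - y)) := by rw [h1, h2]
        _ = (p * e) * (x - y) := by ring
        _ = 0 := by rw [hpe, zero_mul]
    exact sub_eq_zero.mp h3
  set f : A := δ p with hfdef
  have hff : f * f = f := by rw [hfdef, ← map_mul, hpp]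
  have hfs : star f = f := by rw [hfdef, ← map_star, hps]
  have hfδ : ∀ a : A, f * δ a = δ a := by
    intro a; rw [hfdef, ← map_mul, hδp]
  -- the generalized inverse as a bare function
  set g : A → A := fun a => p * Classical.choose (hrange p a) with hgdef
  have hspec : ∀ a : A, a * δ p = δ (Classical.choose (hrange p a)) :=
    fun a => Classical.choose_spec (hrange p a)
  have hg1 : ∀ a : A, p * g a = g a := by
    intro a; simp only [hgdef]; rw [← mul_assoc, hpp]
  have hg2 : ∀ a : A, δ (g a) = f * a := by
    intro a
    simp only [hgdef]
    rw [map_mul, ← hspec a]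
    calc δ p * (a * δ p) = (δ p * δ p) * a := by ring
      _ = f * a := by rw [← hfdef, hff]
  have hgδ : ∀ x : A, g (δ x) = p * x := by
    intro x
    refine hinj _ _ (hg1 _) (by rw [← mul_assoc, hpp]) ?_
    rw [hg2, hfδ, hδp]
  -- build the star algebra hom
  set δs : A →⋆ₙₐ[ℂ] A :=
    { toFun := g
      map_smul' := by
        intro r a
        show g (r • a) = r • g a
        refine hinj _ _ (hg1 _) (by rw [mul_smul_comm, hg1]) ?_
        rw [hg2, map_smul, hg2, mul_smul_comm]
      map_zero' := by
        refine hinj _ _ (hg1 _) (by rw [mul_zero]) ?_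
        rw [hg2, mul_zero, map_zero]
      map_add' := by
        intro a b
        refine hinj _ _ (hg1 _) (by rw [mul_add, hg1, hg1]) ?_
        rw [hg2, map_add, hg2, hg2, mul_add]
      map_mul' := by
        intro a b
        refine hinj _ _ (hg1 _) (by rw [← mul_assoc, hg1]) ?_
        rw [hg2, map_mul, hg2, hg2]
        calc f * (a * b) = (f * f) * (a * b) := by rw [hff]
          _ = f * a * (f * b) := by ring
      map_star' := by
        intro a
        refine hinj _ _ (hg1 _) (hstar _ (hg1 a)) ?_
        rw [hg2, map_star, hg2, star_mul, hfs, mul_comm] } with hδsdef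
  refine ⟨δs, ⟨⟨⟨1 - f, ?_, ?_⟩, ?_⟩, ?_, ?_⟩, ?_⟩
  · -- δs (1 - f) = 0
    show g (1 - f) = 0
    refine hinj _ _ (hg1 _) (by rw [mul_zero]) ?_
    rw [hg2, mul_sub, mul_one, hff, sub_self, map_zero]
  · -- unit property of kernel of δs
    intro a ha
    have ha' : g a = 0 := ha
    have h0 : δ (g a) = 0 := by rw [ha', map_zero]
    rw [hg2] at h0
    rw [sub_mul, one_mul, h0, sub_zero]
  · -- range of δs is an ideal
    intro a b
    refine ⟨δ (b * g a), ?_⟩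
    show b * g a = g (δ (b * g a))
    rw [hgδ]
    calc b * g a = b * (p * g a) := by rw [hg1]
      _ = p * (b * g a) := by ring
  · -- δ ∘ δs ∘ δ = δ
    intro a
    show δ (g (δ a)) = δ a
    rw [hg2, hfδ]
  · -- δs ∘ δ ∘ δs = δs
    intro a
    show g (δ (g a)) = g a
    rw [hgδ, hg1]
  · -- uniqueness
    rintro δt ⟨⟨⟨e₂, he₂0, he₂u⟩, hrange₂⟩, h1, h2⟩
    have u1 : ∀ x y : A, δ x = 0 → x * δt y = 0 := by
      intro x y hx
      obtain ⟨c, hc⟩ := hrange₂ y x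
      have hδc : δ (δt c) = 0 := by
        rw [← hc, map_mul, hx, zero_mul]
      have := h2 c
      rw [hδc, map_zero] at this
      rw [hc, ← this]
    have u1' : ∀ x y : A, δt x = 0 → x * δ y = 0 := by
      intro x y hx
      obtain ⟨c, hc⟩ := hrange y x
      have hδc : δt (δ c) = 0 := by
        rw [← hc, map_mul, hx, zero_mul]
      have := h1 c
      rw [hδc, map_zero] at this
      rw [hc, ← this]
    have u2 : ∀ a : A, p * δt a = δt a := by
      intro a
      have h0 : e * δt a = 0 := u1 e a he0
      calc p * δt a = δt a - e * δt a := by ring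
        _ = δt a := by rw [h0, sub_zero]
    -- symmetric facts for δt
    have he₂e : e₂ * e₂ = e₂ := he₂u e₂ he₂0
    have hp₂e : (1 - e₂) * e₂ = 0 := by rw [sub_mul, one_mul, he₂e, sub_self]
    have u2' : ∀ a : A, (1 - e₂) * δ a = δ a := by
      intro a
      have h0 : e₂ * δ a = 0 := u1' e₂ a he₂0
      calc (1 - e₂) * δ a = δ a - e₂ * δ a := by ring
        _ = δ a := by rw [h0, sub_zero]
    have u3' : ∀ a : A, δ (δt a) = (1 - e₂) * a := by
      intro a
      have hd0 : δt (δ (δt a) - a) = 0 := by rw [map_sub, h2, sub_self]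
      have hd1 : e₂ * (δ (δt a) - a) = δ (δt a) - a := he₂u _ hd0
      have hd2 : (1 - e₂) * (δ (δt a) - a) = 0 := by
        calc (1 - e₂) * (δ (δt a) - a) = ((1 - e₂) * e₂) * (δ (δt a) - a) := by
              rw [mul_assoc, hd1]
          _ = 0 := by rw [hp₂e, zero_mul]
      have hd3 : (1 - e₂) * δ (δt a) = (1 - e₂) * a :=
        sub_eq_zero.mp (by rw [← mul_sub]; exact hd2)
      rw [← u2' (δt a), hd3]
    -- identify 1 - e₂ with f
    have hfp₂ : f * (1 - e₂) = 1 - e₂ := by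
      have h5 := u3' 1
      rw [mul_one] at h5
      calc f * (1 - e₂) = f * δ (δt 1) := by rw [h5]
        _ = δ (δt 1) := hfδ _
        _ = 1 - e₂ := h5
    have hp₂f : (1 - e₂) * f = f := u2' p
    have hfe₂ : f = 1 - e₂ := by
      rw [← hfp₂, mul_comm, hp₂f]
    have u4 : ∀ a : A, δ (δt a) = f * a := by
      intro a; rw [u3' a, hfe₂]
    -- conclude
    ext a
    show δt a = g a
    exact hinj _ _ (u2 a) (hg1 a) (by rw [u4, hg2])
end

section
/- Let A, B be unital commutative C*-algebras with endomorphisms δ : A → A, γ : B → B, and let (M(A), α), (M(B), β) be the dual partial dynamical systems. There exists a unital monomorphism T : A → B with T ∘ δ = γ ∘ T if and only if (M(B), β) is an extension of (M(A), α), i.e., there is a continuous surjection Ψ : M(B) → M(A) with Ψ⁻¹(Δ_α) = Δ_β and α(Ψ(x)) = Ψ(β(x)) for all x ∈ Δ_β. -/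
/-!
By Gelfand duality, every unital `⋆`-homomorphism `T : C(M, ℂ) → C(M', ℂ)` is composition with
a continuous map `Ψ : M' → M`, and `T` is injective exactly when `Ψ` is surjective (Urysohn).
For such `T`, the relation `T ∘ δ = γ ∘ T` tested on the unit says that the indicators of
`Ψ⁻¹(Δα)` and `Δβ` agree, and tested on all `a` it says that no function separates
`α (Ψ x)` from `Ψ (β x)`, so these points coincide.
-/

open Classical WeakDual.CharacterSpace

namespace ContinuousMap

variable {X Y : Type*} [TopologicalSpace X] [TopologicalSpace Y]

theorem exists_eq_compStarAlgHom' [CompactSpace X] [T2Space X] [CompactSpace Y]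
    (T : C(X, ℂ) →⋆ₐ[ℂ] C(Y, ℂ)) : ∃ Ψ : C(Y, X), T = compStarAlgHom' ℂ ℂ Ψ := by
  refine ⟨((homeoEval X ℂ).symm : C(_, X)).comp
    ((compContinuousMap T).comp (continuousMapEval Y ℂ)), ?_⟩
  ext a y
  exact congr($((homeoEval X ℂ).apply_symm_apply
    (compContinuousMap T (continuousMapEval Y ℂ y))) a).symm

theorem injective_compStarAlgHom'_iff [NormalSpace X] [T2Space X] [CompactSpace Y]
    {Ψ : C(Y, X)} : Function.Injective (compStarAlgHom' ℂ ℂ Ψ) ↔ Function.Surjective Ψ := by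
  refine ⟨fun hΨ m => ?_, fun hΨ _ _ h => ext <| hΨ.forall.mpr fun y => congr($h y)⟩
  by_contra hm
  obtain ⟨f, hf0, hf1, -⟩ := exists_continuous_zero_one_of_isClosed
    (isCompact_range Ψ.continuous).isClosed isClosed_singleton
    (Set.disjoint_singleton_right.mpr hm)
  let a : C(X, ℂ) := (⟨Complex.ofReal, Complex.continuous_ofReal⟩ : C(ℝ, ℂ)).comp f
  have ha : a = 0 := hΨ <| by
    ext y
    simp [a, hf0 (Set.mem_range_self y)]
  simpa [a, hf1 rfl] using congr($ha m)

theorem intertwines_compStarAlgHom'_iff [CompactSpace X] [T2Space X]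
    {Δα : Set X} {α : C(Δα, X)} {Δβ : Set Y} {β : C(Δβ, Y)}
    {δ : C(X, ℂ) → C(X, ℂ)} {γ : C(Y, ℂ) → C(Y, ℂ)}
    (hδ : ∀ a x, δ a x = if h : x ∈ Δα then a (α ⟨x, h⟩) else 0)
    (hγ : ∀ a x, γ a x = if h : x ∈ Δβ then a (β ⟨x, h⟩) else 0) (Ψ : C(Y, X)) :
    (∀ a, compStarAlgHom' ℂ ℂ Ψ (δ a) = γ (compStarAlgHom' ℂ ℂ Ψ a)) ↔
      Ψ ⁻¹' Δα = Δβ ∧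
        ∀ (x : Y) (hx : x ∈ Δβ) (hx' : Ψ x ∈ Δα), α ⟨Ψ x, hx'⟩ = Ψ (β ⟨x, hx⟩) := by
  simp only [ContinuousMap.ext_iff, compStarAlgHom'_apply, comp_apply, hδ, hγ]
  constructor
  · intro h
    have hpre : Ψ ⁻¹' Δα = Δβ := by
      ext x
      have h1 := h 1 x
      by_cases hx : x ∈ Δβ <;> by_cases hx' : Ψ x ∈ Δα <;> simp [hx, hx'] at h1 ⊢
    refine ⟨hpre, fun x hx hx' => (continuousMapEval_bijective X ℂ).injective ?_⟩
    ext a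
    simpa [hx, hx'] using h a x
  · rintro ⟨hpre, hconj⟩ a x
    have hmem : Ψ x ∈ Δα ↔ x ∈ Δβ := Set.ext_iff.mp hpre x
    by_cases hx : x ∈ Δβ
    · simp [hx, hmem.mpr hx, hconj x hx (hmem.mpr hx)]
    · simp [hx, mt hmem.mp hx]

end ContinuousMap

theorem stmt4_general {M M' : Type*} [TopologicalSpace M] [CompactSpace M] [T2Space M]
    [TopologicalSpace M'] [CompactSpace M']
    (Δα : Set M) (α : C(Δα, M))
    (Δβ : Set M') (β : C(Δβ, M'))
    (δ : C(M, ℂ) → C(M, ℂ)) (γ : C(M', ℂ) → C(M', ℂ))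
    (hδ : ∀ (a : C(M, ℂ)) (x : M), δ a x = if h : x ∈ Δα then a (α ⟨x, h⟩) else 0)
    (hγ : ∀ (a : C(M', ℂ)) (x : M'), γ a x = if h : x ∈ Δβ then a (β ⟨x, h⟩) else 0) :
    (∃ T : C(M, ℂ) →⋆ₐ[ℂ] C(M', ℂ), Function.Injective T ∧ ∀ a, T (δ a) = γ (T a)) ↔
    (∃ Ψ : C(M', M), Function.Surjective Ψ ∧ (⇑Ψ) ⁻¹' Δα = Δβ ∧
      ∀ (x : M') (hx : x ∈ Δβ) (hx' : Ψ x ∈ Δα), α ⟨Ψ x, hx'⟩ = Ψ (β ⟨x, hx⟩)) := by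
  constructor
  · rintro ⟨T, hinj, hcomm⟩
    obtain ⟨Ψ, rfl⟩ := ContinuousMap.exists_eq_compStarAlgHom' T
    exact ⟨Ψ, ContinuousMap.injective_compStarAlgHom'_iff.mp hinj,
      (ContinuousMap.intertwines_compStarAlgHom'_iff hδ hγ Ψ).mp hcomm⟩
  · rintro ⟨Ψ, hsurj, hconj⟩
    exact ⟨ContinuousMap.compStarAlgHom' ℂ ℂ Ψ,
      ContinuousMap.injective_compStarAlgHom'_iff.mpr hsurj,
      (ContinuousMap.intertwines_compStarAlgHom'_iff hδ hγ Ψ).mpr hconj⟩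

/-- an endomorphism `γ` of `C(M', ℂ)` extends an endomorphism `δ` of `C(M, ℂ)`
via a unital monomorphism `T` (i.e. `T ∘ δ = γ ∘ T`) iff the dual partial dynamical system
`(M', β)` is an extension of `(M, α)`, i.e. there is a continuous surjection `Ψ : M' → M` with
`Ψ⁻¹(Δα) = Δβ` and `α(Ψ(x)) = Ψ(β(x))` on `Δβ`. -/
theorem stmt4 {M M' : Type*} [TopologicalSpace M] [CompactSpace M] [T2Space M]
    [TopologicalSpace M'] [CompactSpace M'] [T2Space M']
    (Δα : Set M) (hΔα : IsClopen Δα) (α : C(Δα, M))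
    (Δβ : Set M') (hΔβ : IsClopen Δβ) (β : C(Δβ, M'))
    (δ : C(M, ℂ) → C(M, ℂ)) (γ : C(M', ℂ) → C(M', ℂ))
    (hδ : ∀ (a : C(M, ℂ)) (x : M), δ a x = if h : x ∈ Δα then a (α ⟨x, h⟩) else 0)
    (hγ : ∀ (a : C(M', ℂ)) (x : M'), γ a x = if h : x ∈ Δβ then a (β ⟨x, h⟩) else 0) :
    (∃ T : C(M, ℂ) →⋆ₐ[ℂ] C(M', ℂ), Function.Injective T ∧ ∀ a, T (δ a) = γ (T a)) ↔
    (∃ Ψ : C(M', M), Function.Surjective Ψ ∧ (⇑Ψ) ⁻¹' Δα = Δβ ∧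
      ∀ (x : M') (hx : x ∈ Δβ) (hx' : Ψ x ∈ Δα), α ⟨Ψ x, hx'⟩ = Ψ (β ⟨x, hx⟩)) :=
  stmt4_general Δα α Δβ β δ γ hδ hγ
end

section
/- Let (A, U) be a C*-dynamical system with δ(a) = U a U* an endomorphism of the unital commutative C*-algebra A ⊂ L(H), and let P = 1 - Q where Q is the carrier projection of the ideal ker δ = (1 - U*U)A ∩ A. Then U*U ≤ P, P commutes with A, and (ker δ)^⊥ = PA ∩ A. -/
/-!
Since `U U* U = U`, the operator `E = U*U` is a projection, and as it commutes with `A` the map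
`δ` is multiplicative on `A`; hence `ker δ` is a left ideal of `A`. The carrier subspace of a
left ideal of a `*`-algebra is invariant under the algebra and its adjoints, so its projection `Q`
commutes with `A`. An element `b ∈ ker δ` satisfies `U b = U b E = δ(b) U = 0`, so `E` kills the
carrier subspace: `E Q = 0`, and `1 - Q - E` is a projection, hence positive. Finally `a` kills
`ker δ` exactly when `a Q = 0`, i.e. when `a = (1 - Q) a`; conversely `(1 - Q) c` kills `ker δ`
because `Q` fixes `c b ∈ ker δ`.
-/

section PartialIsometry

variable {R : Type*} [Ring R] [StarRing R] {U : R}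

theorem star_mul_self_mul_star_of_mul_star_mul_self (hU : U * star U * U = U) :
    star U * U * star U = star U := by
  simpa only [star_mul, star_star, mul_assoc] using congrArg star hU

theorem isStarProjection_star_mul_self (hU : U * star U * U = U) :
    IsStarProjection (star U * U) where
  isIdempotentElem := by
    rw [IsIdempotentElem, ← mul_assoc, star_mul_self_mul_star_of_mul_star_mul_self hU]
  isSelfAdjoint := .star_mul_self U

theorem mul_star_mul_self_eq_zero_of_conj_eq_zero (hU : U * star U * U = U) {b : R}
    (hb : Commute (star U * U) b) (hδb : U * b * star U = 0) : star U * U * b = 0 := by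
  have hUb : U * b = 0 := by
    calc U * b = U * (star U * U) * b := by rw [← mul_assoc, hU]
      _ = U * b * star U * U := by rw [mul_assoc, hb.eq]; noncomm_ring
      _ = 0 := by rw [hδb, zero_mul]
  rw [mul_assoc, hUb, mul_zero]

theorem conj_mul_conj (hU : U * star U * U = U) (b : R) {c : R} (hc : Commute (star U * U) c) :
    U * b * star U * (U * c * star U) = U * (b * c) * star U := by
  calc U * b * star U * (U * c * star U) = U * b * (star U * U * c * star U) := by noncomm_ring
    _ = U * b * (c * (star U * U * star U)) := by rw [hc.eq]; noncomm_ring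
    _ = U * (b * c) * star U := by
      rw [star_mul_self_mul_star_of_mul_star_mul_self hU]; noncomm_ring

theorem conj_mul_eq_zero (hU : U * star U * U = U) (a : R) {b : R}
    (hb : Commute (star U * U) b) (hδb : U * b * star U = 0) : U * (a * b) * star U = 0 := by
  rw [← conj_mul_conj hU a hb, hδb, mul_zero]

end PartialIsometry

theorem IsStarProjection.commute_of_conj_eq {R : Type*} [Semigroup R] [StarMul R] {p a : R}
    (hp : IsStarProjection p) (ha : p * a * p = a * p) (ha' : p * star a * p = star a * p) :
    Commute p a := by
  have h := congrArg star ha'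
  simp only [star_mul, star_star, hp.isSelfAdjoint.star_eq, ← mul_assoc] at h
  exact h.symm.trans ha

section Carrier

variable {R M : Type*} [Ring R] [TopologicalSpace M] [AddCommGroup M] [Module R M]
  [ContinuousConstSMul R M] [ContinuousAdd M]

def carrierSubspace (K : Set (M →L[R] M)) : Submodule R M :=
  (Submodule.span R {x | ∃ b ∈ K, ∃ y, b y = x}).topologicalClosure

variable {K : Set (M →L[R] M)}

theorem apply_mem_carrierSubspace {b : M →L[R] M} (hb : b ∈ K) (y : M) :
    b y ∈ carrierSubspace K :=
  Submodule.le_topologicalClosure _ (Submodule.subset_span ⟨b, hb, y, rfl⟩)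

theorem carrierSubspace_le_ker [T1Space M] {T : M →L[R] M} (hT : ∀ b ∈ K, T * b = 0) :
    carrierSubspace K ≤ LinearMap.ker (T : M →ₗ[R] M) := by
  refine Submodule.topologicalClosure_minimal _ (Submodule.span_le.2 ?_) T.isClosed_ker
  rintro _ ⟨b, hb, y, rfl⟩
  exact congr($(hT b hb) y)

theorem carrierSubspace_mem_invtSubmodule {a : M →L[R] M} (ha : ∀ b ∈ K, a * b ∈ K) :
    carrierSubspace K ∈ Module.End.invtSubmodule (a : M →ₗ[R] M) := by
  refine Submodule.topologicalClosure_minimal _ (Submodule.span_le.2 ?_)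
    ((Submodule.isClosed_topologicalClosure _).preimage a.continuous)
  rintro _ ⟨b, hb, y, rfl⟩
  exact apply_mem_carrierSubspace (ha b hb) y

variable {Q : M →L[R] M}

theorem mul_eq_self_of_range_eq_carrierSubspace (hQ : IsIdempotentElem Q)
    (hQK : LinearMap.range (Q : M →ₗ[R] M) = carrierSubspace K) {b : M →L[R] M} (hb : b ∈ K) :
    Q * b = b := by
  ext y
  have hQ' := ContinuousLinearMap.IsIdempotentElem.toLinearMap hQ
  exact (LinearMap.IsIdempotentElem.mem_range_iff hQ').1 (hQK ▸ apply_mem_carrierSubspace hb y)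

theorem mul_eq_zero_of_range_eq_carrierSubspace [T1Space M]
    (hQK : LinearMap.range (Q : M →ₗ[R] M) = carrierSubspace K) {T : M →L[R] M}
    (hT : ∀ b ∈ K, T * b = 0) : T * Q = 0 := by
  ext y
  exact carrierSubspace_le_ker hT (hQK ▸ LinearMap.mem_range_self _ y)

theorem conj_eq_of_range_eq_carrierSubspace (hQ : IsIdempotentElem Q)
    (hQK : LinearMap.range (Q : M →ₗ[R] M) = carrierSubspace K) {a : M →L[R] M}
    (ha : ∀ b ∈ K, a * b ∈ K) : Q * a * Q = a * Q :=
  ContinuousLinearMap.IsIdempotentElem.conj_eq_of_range_mem_invtSubmodule hQ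
    (hQK ▸ carrierSubspace_mem_invtSubmodule ha)

end Carrier

theorem stmt8_general {H : Type*} [NormedAddCommGroup H] [InnerProductSpace ℂ H] [CompleteSpace H]
    (A : StarSubalgebra ℂ (H →L[ℂ] H))
    (U : H →L[ℂ] H) (hU : U * star U * U = U)
    (hcomm : ∀ a ∈ A, star U * U * a = a * (star U * U))
    (Q : H →L[ℂ] H) (hQ1 : Q * Q = Q) (hQ2 : IsSelfAdjoint Q)
    (hQ3 : (LinearMap.range (Q : H →ₗ[ℂ] H) : Set H) =
      closure (Submodule.span ℂ
        {x : H | ∃ b : H →L[ℂ] H, b ∈ A ∧ U * b * star U = 0 ∧ ∃ h : H, b h = x} : Set H)) :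
    ((1 - Q) - star U * U).IsPositive ∧
    (∀ a ∈ A, (1 - Q) * a = a * (1 - Q)) ∧
    (∀ a ∈ A, ((∀ b ∈ A, U * b * star U = 0 → a * b = 0) ↔ ∃ c ∈ A, a = (1 - Q) * c)) := by
  set kerδ : Set (H →L[ℂ] H) := {b | b ∈ A ∧ U * b * star U = 0}
  have hQK : LinearMap.range (Q : H →ₗ[ℂ] H) = carrierSubspace kerδ :=
    SetLike.coe_injective <| hQ3.trans <| by
      simp only [carrierSubspace, Submodule.topologicalClosure_coe, kerδ, Set.mem_ofPred_eq,
        and_assoc]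
  have hQ : IsStarProjection Q := ⟨hQ1, hQ2⟩
  have hideal : ∀ a ∈ A, ∀ b ∈ kerδ, a * b ∈ kerδ := fun a ha b ⟨hb, hδb⟩ =>
    ⟨mul_mem ha hb, conj_mul_eq_zero hU a (hcomm b hb) hδb⟩
  have hQA : ∀ a ∈ A, Q * a = a * Q := fun a ha =>
    hQ.commute_of_conj_eq (conj_eq_of_range_eq_carrierSubspace hQ1 hQK (hideal a ha))
      (conj_eq_of_range_eq_carrierSubspace hQ1 hQK (hideal _ (star_mem ha)))
  have hEQ : star U * U * Q = 0 :=
    mul_eq_zero_of_range_eq_carrierSubspace hQK fun b ⟨hb, hδb⟩ =>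
      mul_star_mul_self_eq_zero_of_conj_eq_zero hU (hcomm b hb) hδb
  refine ⟨?_, fun a ha => ?_, fun a ha => ⟨fun hann => ⟨a, ha, ?_⟩, ?_⟩⟩
  · refine .of_isStarProjection ((isStarProjection_star_mul_self hU).sub_of_mul_eq_left
      hQ.one_sub ?_)
    rw [mul_sub, mul_one, hEQ, sub_zero]
  · rw [sub_mul, mul_sub, one_mul, mul_one, hQA a ha]
  · have haQ : a * Q = 0 :=
      mul_eq_zero_of_range_eq_carrierSubspace hQK fun b ⟨hb, hδb⟩ => hann b hb hδb
    rw [sub_mul, one_mul, hQA a ha, haQ, sub_zero]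
  · rintro ⟨c, hc, rfl⟩ b hb hδb
    rw [mul_assoc, sub_mul, one_mul,
      mul_eq_self_of_range_eq_carrierSubspace hQ1 hQK (hideal c hc b ⟨hb, hδb⟩), sub_self]

/-- for a C*-dynamical system `(A, U)` (A unital commutative, `U` a partial
isometry with `U A U* ⊆ A` and `U*U` commuting with `A`), let `Q` be the carrier projection of
`ker δ = {a ∈ A : U a U* = 0}` and `P = 1 - Q`. Then `U*U ≤ P`, `P` commutes with `A`, and
`(ker δ)^⊥ = PA ∩ A`. -/
theorem stmt8 {H : Type*} [NormedAddCommGroup H] [InnerProductSpace ℂ H] [CompleteSpace H]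
    (A : StarSubalgebra ℂ (H →L[ℂ] H))
    (hcommA : ∀ a ∈ A, ∀ b ∈ A, a * b = b * a)
    (U : H →L[ℂ] H) (hU : U * star U * U = U)
    (hA : ∀ a ∈ A, U * a * star U ∈ A)
    (hcomm : ∀ a ∈ A, star U * U * a = a * (star U * U))
    (Q : H →L[ℂ] H) (hQ1 : Q * Q = Q) (hQ2 : IsSelfAdjoint Q)
    (hQ3 : (LinearMap.range (Q : H →ₗ[ℂ] H) : Set H) =
      closure (Submodule.span ℂ
        {x : H | ∃ b : H →L[ℂ] H, b ∈ A ∧ U * b * star U = 0 ∧ ∃ h : H, b h = x} : Set H)) :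
    ((1 - Q) - star U * U).IsPositive ∧
    (∀ a ∈ A, (1 - Q) * a = a * (1 - Q)) ∧
    (∀ a ∈ A, ((∀ b ∈ A, U * b * star U = 0 → a * b = 0) ↔ ∃ c ∈ A, a = (1 - Q) * c)) :=
  stmt8_general A U hU hcomm Q hQ1 hQ2 hQ3
end

section
/- If (A, U) is a reversible C*-dynamical system (U A U* ⊂ A and U* A U ⊂ A, with U a partial isometry and A unital commutative), then δ(a) = U a U* and δ*(a) = U* a U are mutually generalized-inverse partial automorphisms of A, and (ker δ)^⊥ = δ*(A) = U*U A while δ(A) = (ker δ*)^⊥ = U U* A. -/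
lemma aux9 {H : Type*} [NormedAddCommGroup H] [InnerProductSpace ℂ H] [CompleteSpace H]
    (A : StarSubalgebra ℂ (H →L[ℂ] H))
    (hcommA : ∀ a ∈ A, ∀ b ∈ A, a * b = b * a)
    (V : H →L[ℂ] H) (hV : V * star V * V = V)
    (h1 : ∀ a ∈ A, V * a * star V ∈ A)
    (h2 : ∀ a ∈ A, star V * a * V ∈ A) :
    (∀ a ∈ A, V * (star V * (V * a * star V) * V) * star V = V * a * star V) ∧
    ((∃ e ∈ A, V * e * star V = 0 ∧ ∀ a ∈ A, V * a * star V = 0 → e * a = a) ∧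
      (∀ a ∈ A, ∀ b ∈ A, ∃ c ∈ A, b * (V * a * star V) = V * c * star V)) ∧
    ({a : H →L[ℂ] H | a ∈ A ∧ ∀ b ∈ A, V * b * star V = 0 → a * b = 0}
        = {x : H →L[ℂ] H | ∃ a ∈ A, x = star V * a * V}) ∧
    ({x : H →L[ℂ] H | ∃ a ∈ A, x = star V * a * V}
        = {x : H →L[ℂ] H | ∃ a ∈ A, x = star V * V * a}) := by
  have hV' : star V * V * star V = star V := by
    have := congrArg star hV
    simpa [mul_assoc] using this
  have hpA : star V * V ∈ A := by simpa using h2 1 (one_mem A)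
  have hqA : V * star V ∈ A := by simpa using h1 1 (one_mem A)
  have hp : (star V * V) * (star V * V) = star V * V := by
    calc (star V * V) * (star V * V) = (star V * V * star V) * V := by
          simp only [mul_assoc]
      _ = star V * V := by rw [hV']
  -- cancel : V (p a) V* = V a V*
  have cancel : ∀ a : H →L[ℂ] H, V * ((star V * V) * a) * star V = V * a * star V := by
    intro a
    have : V * ((star V * V) * a) = (V * star V * V) * a := by simp only [mul_assoc]
    rw [this, hV]
  have key : ∀ a : H →L[ℂ] H,
      star V * (V * a * star V) * V = (star V * V) * a * (star V * V) := by
    intro a; simp only [mul_assoc]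
  have keyp : ∀ a ∈ A, star V * (V * a * star V) * V = (star V * V) * a := by
    intro a ha
    rw [key, mul_assoc, hcommA a ha _ hpA, ← mul_assoc, hp]
  have kerChar : ∀ a ∈ A, (V * a * star V = 0 ↔ (star V * V) * a = 0) := by
    intro a ha
    constructor
    · intro h
      rw [← keyp a ha, h, mul_zero, zero_mul]
    · intro h
      rw [← cancel a, h, mul_zero, zero_mul]
  have eker : V * (1 - star V * V) * star V = 0 := by
    rw [mul_sub, mul_one, sub_mul]
    have : V * (star V * V) = V := by rw [← mul_assoc, hV]
    rw [this, sub_self]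
  have him : ∀ a : H →L[ℂ] H,
      (star V * V) * (star V * a * V) = star V * a * V := by
    intro a
    have : (star V * V) * (star V * a * V) = (star V * V * star V) * a * V := by
      simp only [mul_assoc]
    rw [this, hV']
  refine ⟨?_, ⟨⟨1 - star V * V, sub_mem (one_mem A) hpA, eker, ?_⟩, ?_⟩, ?_, ?_⟩
  · -- generalized inverse
    intro a ha
    rw [keyp a ha, cancel a]
  · -- kernel unital
    intro a ha h0
    have hp0 : (star V * V) * a = 0 := (kerChar a ha).1 h0
    rw [sub_mul, one_mul, hp0, sub_zero]
  · -- image is an ideal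
    intro a ha b hb
    refine ⟨star V * b * V * a, mul_mem (h2 b hb) ha, ?_⟩
    have hq : (V * star V) * (V * a * star V) = V * a * star V := by
      have : (V * star V) * (V * a * star V) = (V * star V * V) * a * star V := by
        simp only [mul_assoc]
      rw [this, hV]
    calc b * (V * a * star V) = b * ((V * star V) * (V * a * star V)) := by rw [hq]
      _ = (b * (V * star V)) * (V * a * star V) := (mul_assoc b _ _).symm
      _ = ((V * star V) * b) * (V * a * star V) := by rw [hcommA b hb _ hqA]
      _ = V * (star V * b * V * a) * star V := by simp only [mul_assoc]
  · -- annihilator of kernel = image of δ*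
    ext x
    simp only [Set.mem_setOf_eq]
    constructor
    · rintro ⟨hxA, hann⟩
      refine ⟨V * x * star V, h1 x hxA, ?_⟩
      have h0 := hann _ (sub_mem (one_mem A) hpA) eker
      rw [mul_sub, mul_one, sub_eq_zero] at h0
      rw [keyp x hxA, ← hcommA x hxA _ hpA, ← h0]
    · rintro ⟨a, ha, rfl⟩
      refine ⟨h2 a ha, ?_⟩
      intro b hb h0
      have hpb := (kerChar b hb).1 h0
      calc (star V * a * V) * b
          = ((star V * V) * (star V * a * V)) * b := by rw [him]
        _ = ((star V * a * V) * (star V * V)) * b := by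
              rw [hcommA _ hpA _ (h2 a ha)]
        _ = (star V * a * V) * ((star V * V) * b) := by rw [mul_assoc]
        _ = 0 := by rw [hpb, mul_zero]
  · -- image of δ* = p A
    ext x
    simp only [Set.mem_setOf_eq]
    constructor
    · rintro ⟨a, ha, rfl⟩
      exact ⟨star V * a * V, h2 a ha, (him a).symm⟩
    · rintro ⟨a, ha, rfl⟩
      exact ⟨V * a * star V, h1 a ha, (keyp a ha).symm⟩

/-- for a reversible C*-dynamical system (`U A U* ⊆ A`, `U* A U ⊆ A`, `U` a
partial isometry, `A` unital commutative), the maps `δ(a) = U a U*` and `δ*(a) = U* a U` are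
mutually generalized-inverse partial automorphisms of `A`, with
`(ker δ)^⊥ = δ*(A) = U*U A` and `δ(A) = (ker δ*)^⊥ = U U* A`. -/
theorem stmt9 {H : Type*} [NormedAddCommGroup H] [InnerProductSpace ℂ H] [CompleteSpace H]
    (A : StarSubalgebra ℂ (H →L[ℂ] H))
    (hcommA : ∀ a ∈ A, ∀ b ∈ A, a * b = b * a)
    (U : H →L[ℂ] H) (hU : U * star U * U = U)
    (h1 : ∀ a ∈ A, U * a * star U ∈ A)
    (h2 : ∀ a ∈ A, star U * a * U ∈ A) :
    -- mutually generalized inverses: δ ∘ δ* ∘ δ = δ and δ* ∘ δ ∘ δ* = δ* on A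
    (∀ a ∈ A, U * (star U * (U * a * star U) * U) * star U = U * a * star U) ∧
    (∀ a ∈ A, star U * (U * (star U * a * U) * star U) * U = star U * a * U) ∧
    -- δ is a partial automorphism: unital kernel and image an ideal (within A)
    ((∃ e ∈ A, U * e * star U = 0 ∧ ∀ a ∈ A, U * a * star U = 0 → e * a = a) ∧
      (∀ a ∈ A, ∀ b ∈ A, ∃ c ∈ A, b * (U * a * star U) = U * c * star U)) ∧
    -- δ* is a partial automorphism
    ((∃ e ∈ A, star U * e * U = 0 ∧ ∀ a ∈ A, star U * a * U = 0 → e * a = a) ∧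
      (∀ a ∈ A, ∀ b ∈ A, ∃ c ∈ A, b * (star U * a * U) = star U * c * U)) ∧
    -- (ker δ)^⊥ = δ*(A) = U*U A
    ({a : H →L[ℂ] H | a ∈ A ∧ ∀ b ∈ A, U * b * star U = 0 → a * b = 0}
        = {x : H →L[ℂ] H | ∃ a ∈ A, x = star U * a * U}) ∧
    ({x : H →L[ℂ] H | ∃ a ∈ A, x = star U * a * U}
        = {x : H →L[ℂ] H | ∃ a ∈ A, x = star U * U * a}) ∧
    -- δ(A) = (ker δ*)^⊥ = U U* A
    ({x : H →L[ℂ] H | ∃ a ∈ A, x = U * a * star U}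
        = {a : H →L[ℂ] H | a ∈ A ∧ ∀ b ∈ A, star U * b * U = 0 → a * b = 0}) ∧
    ({x : H →L[ℂ] H | ∃ a ∈ A, x = U * a * star U}
        = {x : H →L[ℂ] H | ∃ a ∈ A, x = U * star U * a}) := by
  have hU' : star U * U * star U = star U := by
    have := congrArg star hU
    simpa [mul_assoc] using this
  obtain ⟨g1, pa1, s1, s2⟩ := aux9 A hcommA U hU h1 h2
  have hU2 : star U * star (star U) * star U = star U := by simpa [star_star] using hU'
  have h1' : ∀ a ∈ A, star U * a * star (star U) ∈ A := by
    intro a ha; simpa [star_star] using h2 a ha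
  have h2' : ∀ a ∈ A, star (star U) * a * star U ∈ A := by
    intro a ha; simpa [star_star] using h1 a ha
  obtain ⟨g2, pa2, s3, s4⟩ := aux9 A hcommA (star U) hU2 h1' h2'
  simp only [star_star] at g2 pa2 s3 s4
  exact ⟨g1, g2, pa1, pa2, s1, s2, s3.symm, s4⟩
end

section
/- Let (M, Δ, α) be a partial dynamical system, Y ⊂ M a closed set containing M \ α(Δ), and let M̃ = ⋃_{N∈ℕ} M_N ∪ M_∞ ⊂ ∏_ℕ (M ⊔ {0}) be the natural reversible extension associated with Y, where M_N = {(x₀,…,x_N,0,0,…) : x_n ∈ Δ, α(x_n) = x_{n-1} for 1 ≤ n ≤ N, x_N ∈ Y} and M_∞ = {(x₀,x₁,…) : x_n ∈ Δ, α(x_n) = x_{n-1} for all n ≥ 1}. Then the map α̃(x₀,x₁,…) = (α(x₀),x₀,x₁,…), defined on Δ̃ = {x ∈ M̃ : x₀ ∈ Δ}, is a homeomorphism of Δ̃ onto {x ∈ M̃ : x₁ ≠ 0}, with inverse (x₀,x₁,…) ↦ (x₁,x₂,…). -/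
/-! Membership in `M̃` forces `x₀ = α x₁` as soon as `x₁ ≠ 0`, so the shift undoes `α̃` and
`α̃` undoes the shift. Both maps are continuous coordinatewise: every coordinate is a projection
except the zeroth coordinate of `α̃`, which is `α` applied to `x₀ ∈ Δ`. -/

open Topology

lemma ContinuousOn.sumMap_image_inl {X Y Z W : Type*} [TopologicalSpace X] [TopologicalSpace Y]
    [TopologicalSpace Z] [TopologicalSpace W] {f : X → Y} {s : Set X} (hf : ContinuousOn f s)
    (g : Z → W) : ContinuousOn (Sum.map f g) (Sum.inl '' s) :=
  IsEmbedding.inl.isInducing.continuousOn_image_iff.2 (continuous_inl.comp_continuousOn hf)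

namespace NaturalExtension

variable {M : Type*} (Δ : Set M) (α : M → M) (Y : Set M)

/-- The natural reversible extension `M̃`; `Sum.inr ()` is the adjoined point `0`. -/
def carrier : Set (ℕ → M ⊕ Unit) :=
  {x | (∀ n y, x (n + 1) = Sum.inl y → y ∈ Δ ∧ x n = Sum.inl (α y)) ∧
       (∀ n, x n = Sum.inr () → x (n + 1) = Sum.inr ()) ∧
       (x 0 ≠ Sum.inr ()) ∧
       (∀ n y, x n = Sum.inl y → x (n + 1) = Sum.inr () → y ∈ Y)}

def lift (x : ℕ → M ⊕ Unit) : ℕ → M ⊕ Unit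
  | 0 => Sum.map α id (x 0)
  | n + 1 => x n

variable {Δ α Y}

lemma lift_zero_of_eq_inl {x : ℕ → M ⊕ Unit} {y : M} (hx : x 0 = Sum.inl y) :
    lift α x 0 = Sum.inl (α y) := by
  simp [lift, hx]

lemma lift_mem {x : ℕ → M ⊕ Unit} (hx : x ∈ carrier Δ α Y) {y : M} (hy : y ∈ Δ)
    (hx0 : x 0 = Sum.inl y) : lift α x ∈ carrier Δ α Y := by
  obtain ⟨hstep, hzero, -, hlast⟩ := hx
  refine ⟨?_, ?_, by simp [lift_zero_of_eq_inl hx0], ?_⟩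
  · rintro (_ | n) z hz
    · obtain rfl : y = z := Sum.inl_injective (hx0.symm.trans hz)
      exact ⟨hy, lift_zero_of_eq_inl hx0⟩
    · exact hstep n z hz
  · rintro (_ | _ | n) h
    · simp [lift_zero_of_eq_inl hx0] at h
    · simp [lift, hx0] at h
    · exact hzero (n + 1) h
  · rintro (_ | n) z hz h
    · simp [lift, hx0] at h
    · exact hlast n z hz h

lemma exists_eq_inl_of_one_ne {x : ℕ → M ⊕ Unit} (hx : x ∈ carrier Δ α Y)
    (hx1 : x 1 ≠ Sum.inr ()) : ∃ y ∈ Δ, x 1 = Sum.inl y ∧ x 0 = Sum.inl (α y) := by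
  obtain ⟨y, hy⟩ : ∃ y, x 1 = Sum.inl y := by
    rcases h : x 1 with y | ⟨⟩
    · exact ⟨y, rfl⟩
    · exact absurd h hx1
  obtain ⟨hyΔ, hx0⟩ := hx.1 0 y hy
  exact ⟨y, hyΔ, hy, hx0⟩

lemma comp_succ_mem {x : ℕ → M ⊕ Unit} (hx : x ∈ carrier Δ α Y) (hx1 : x 1 ≠ Sum.inr ()) :
    x ∘ Nat.succ ∈ carrier Δ α Y :=
  ⟨fun n => hx.1 (n + 1), fun n => hx.2.1 (n + 1), hx1, fun n => hx.2.2.2 (n + 1)⟩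

lemma lift_comp_succ_of_one_ne {x : ℕ → M ⊕ Unit} (hx : x ∈ carrier Δ α Y)
    (hx1 : x 1 ≠ Sum.inr ()) : lift α (x ∘ Nat.succ) = x := by
  obtain ⟨y, -, hy, hx0⟩ := exists_eq_inl_of_one_ne hx hx1
  funext n
  cases n with
  | zero => exact (lift_zero_of_eq_inl hy).trans hx0.symm
  | succ n => rfl

variable [TopologicalSpace M]

lemma continuousOn_lift (hα : ContinuousOn α Δ) :
    ContinuousOn (lift α) {x | ∃ y ∈ Δ, x 0 = Sum.inl y} := by
  refine continuousOn_pi.2 fun n => ?_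
  cases n with
  | zero =>
    refine (hα.sumMap_image_inl id).comp (continuous_apply 0).continuousOn ?_
    rintro x ⟨y, hy, hx0⟩
    exact ⟨y, hy, hx0.symm⟩
  | succ n => exact (continuous_apply n).continuousOn

def liftHomeomorph (hα : ContinuousOn α Δ) :
    {x : ℕ → M ⊕ Unit // x ∈ carrier Δ α Y ∧ ∃ y ∈ Δ, x 0 = Sum.inl y} ≃ₜ
      {x : ℕ → M ⊕ Unit // x ∈ carrier Δ α Y ∧ x 1 ≠ Sum.inr ()} where
  toFun x := ⟨lift α x, lift_mem x.2.1 x.2.2.choose_spec.1 x.2.2.choose_spec.2, x.2.1.2.2.1⟩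
  invFun x := ⟨x ∘ Nat.succ, comp_succ_mem x.2.1 x.2.2, by
    obtain ⟨y, hy, hx1, -⟩ := exists_eq_inl_of_one_ne x.2.1 x.2.2
    exact ⟨y, hy, hx1⟩⟩
  left_inv _ := rfl
  right_inv x := Subtype.ext (lift_comp_succ_of_one_ne x.2.1 x.2.2)
  continuous_toFun := ((continuousOn_lift hα).comp_continuous continuous_subtype_val
    fun x => x.2.2).subtype_mk _
  continuous_invFun :=
    ((continuous_pi fun n => continuous_apply (n + 1)).comp continuous_subtype_val).subtype_mk _

end NaturalExtension

open NaturalExtension in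
theorem stmt12_general {M : Type*} [TopologicalSpace M]
    (Δ : Set M) (α : M → M) (hα : ContinuousOn α Δ)
    (Y : Set M)
    (Mt : Set (ℕ → M ⊕ Unit))
    (hMt : Mt = {x | (∀ n y, x (n + 1) = Sum.inl y → y ∈ Δ ∧ x n = Sum.inl (α y)) ∧
                     (∀ n, x n = Sum.inr () → x (n + 1) = Sum.inr ()) ∧
                     (x 0 ≠ Sum.inr ()) ∧
                     (∀ n y, x n = Sum.inl y → x (n + 1) = Sum.inr () → y ∈ Y)}) :
    ∃ h : {x : ℕ → M ⊕ Unit // x ∈ Mt ∧ ∃ y ∈ Δ, x 0 = Sum.inl y} ≃ₜ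
          {x : ℕ → M ⊕ Unit // x ∈ Mt ∧ x 1 ≠ Sum.inr ()},
      (∀ x : {x : ℕ → M ⊕ Unit // x ∈ Mt ∧ ∃ y ∈ Δ, x 0 = Sum.inl y},
        (∀ n, (h x : ℕ → M ⊕ Unit) (n + 1) = (x : ℕ → M ⊕ Unit) n) ∧
        (∀ y ∈ Δ, (x : ℕ → M ⊕ Unit) 0 = Sum.inl y →
          (h x : ℕ → M ⊕ Unit) 0 = Sum.inl (α y))) ∧
      (∀ x : {x : ℕ → M ⊕ Unit // x ∈ Mt ∧ x 1 ≠ Sum.inr ()},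
        ∀ n, (h.symm x : ℕ → M ⊕ Unit) n = (x : ℕ → M ⊕ Unit) (n + 1)) := by
  obtain rfl : Mt = carrier Δ α Y := hMt
  exact ⟨liftHomeomorph hα, fun x => ⟨fun _ => rfl, fun _ _ => lift_zero_of_eq_inl⟩,
    fun _ _ => rfl⟩

/-- let `(M, Δ, α)` be a partial dynamical system and `Y ⊇ M \ α(Δ)` closed.
Encode `M ⊔ {0}` as `M ⊕ Unit` (with `Sum.inr ()` playing the role of `0`) and let
`M̃ ⊆ (M ⊕ Unit)^ℕ` be the natural reversible extension associated with `Y`: sequences whose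
nonzero entries `x₀,…,x_N` (or all entries, `N = ∞`) satisfy `x_n ∈ Δ`, `α(x_n) = x_{n-1}`
for `n ≥ 1`, and `x_N ∈ Y` when the sequence terminates. Then the map
`α̃(x₀,x₁,…) = (α(x₀),x₀,x₁,…)` is a homeomorphism of `Δ̃ = {x ∈ M̃ : x₀ ∈ Δ}` onto
`{x ∈ M̃ : x₁ ≠ 0}`, with inverse the shift `(x₀,x₁,…) ↦ (x₁,x₂,…)`. -/
theorem stmt12 {M : Type*} [TopologicalSpace M] [CompactSpace M] [T2Space M]
    (Δ : Set M) (hΔ : IsClopen Δ) (α : M → M) (hα : ContinuousOn α Δ)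
    (Y : Set M) (hY : IsClosed Y) (hYc : Set.univ \ (α '' Δ) ⊆ Y)
    (Mt : Set (ℕ → M ⊕ Unit))
    (hMt : Mt = {x | (∀ n y, x (n + 1) = Sum.inl y → y ∈ Δ ∧ x n = Sum.inl (α y)) ∧
                     (∀ n, x n = Sum.inr () → x (n + 1) = Sum.inr ()) ∧
                     (x 0 ≠ Sum.inr ()) ∧
                     (∀ n y, x n = Sum.inl y → x (n + 1) = Sum.inr () → y ∈ Y)}) :
    ∃ h : {x : ℕ → M ⊕ Unit // x ∈ Mt ∧ ∃ y ∈ Δ, x 0 = Sum.inl y} ≃ₜ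
          {x : ℕ → M ⊕ Unit // x ∈ Mt ∧ x 1 ≠ Sum.inr ()},
      (∀ x : {x : ℕ → M ⊕ Unit // x ∈ Mt ∧ ∃ y ∈ Δ, x 0 = Sum.inl y},
        (∀ n, (h x : ℕ → M ⊕ Unit) (n + 1) = (x : ℕ → M ⊕ Unit) n) ∧
        (∀ y ∈ Δ, (x : ℕ → M ⊕ Unit) 0 = Sum.inl y →
          (h x : ℕ → M ⊕ Unit) 0 = Sum.inl (α y))) ∧
      (∀ x : {x : ℕ → M ⊕ Unit // x ∈ Mt ∧ x 1 ≠ Sum.inr ()},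
        ∀ n, (h.symm x : ℕ → M ⊕ Unit) n = (x : ℕ → M ⊕ Unit) (n + 1)) :=
  stmt12_general Δ α hα Y Mt hMt
end

section
/- The set M̃ = ⋃_{N∈ℕ} M_N ∪ M_∞ (the natural reversible extension of (M, Δ, α) associated with a closed set Y ⊇ M \ α(Δ)) is a closed, hence compact, subset of the product space ∏_ℕ (M ⊔ {0}), and the projection Φ(x₀, x₁, …) = x₀ is a continuous surjection from M̃ onto M satisfying Φ(α̃(x)) = α(Φ(x)) for x in the domain of α̃. -/
/-!
Each defining condition of `M̃` involves one coordinate or two consecutive ones, so `M̃` is an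
intersection of preimages, under continuous coordinate maps, of closed subsets of `M ⊔ {0}` and
`(M ⊔ {0})²`, where the symbol `0` is `inr ()`. As `inl` and `inr` are closed embeddings,
closedness in `(M ⊔ {0})²` can be checked separately on `M × M`, `M × {0}`, `{0} × M` and
`{0} × {0}`; the only nontrivial piece is the graph of `α` over the closed set `Δ`.
For surjectivity of `Φ`, start at `y` and keep choosing an `α`-preimage in `Δ` as long as one
exists: the orbit can only stop at a point outside `α(Δ)`, which lies in `Y`.
-/

open Function Set Topology Sum

section SumProd

variable {A B C D : Type*} [TopologicalSpace A] [TopologicalSpace B] [TopologicalSpace C]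
  [TopologicalSpace D]

theorem isClosed_of_isClosed_preimage_prodMap_sum {s : Set ((A ⊕ B) × (C ⊕ D))}
    (hll : IsClosed (Prod.map inl inl ⁻¹' s)) (hlr : IsClosed (Prod.map inl inr ⁻¹' s))
    (hrl : IsClosed (Prod.map inr inl ⁻¹' s)) (hrr : IsClosed (Prod.map inr inr ⁻¹' s)) :
    IsClosed s := by
  have hs : s = (Prod.map inl inl '' (Prod.map inl inl ⁻¹' s) ∪
      Prod.map inl inr '' (Prod.map inl inr ⁻¹' s)) ∪
      (Prod.map inr inl '' (Prod.map inr inl ⁻¹' s) ∪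
      Prod.map inr inr '' (Prod.map inr inr ⁻¹' s)) := by
    ext ⟨a | a, c | c⟩ <;> simp
  rw [hs]
  exact (((IsClosedEmbedding.inl.prodMap .inl).isClosedMap _ hll).union
    ((IsClosedEmbedding.inl.prodMap .inr).isClosedMap _ hlr)).union
    (((IsClosedEmbedding.inr.prodMap .inl).isClosedMap _ hrl).union
    ((IsClosedEmbedding.inr.prodMap .inr).isClosedMap _ hrr))

theorem Continuous.sum_getLeft {f : A → B ⊕ C} (hf : Continuous f) (h : ∀ a, (f a).isLeft) :
    Continuous fun a => (f a).getLeft (h a) :=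
  IsEmbedding.inl.continuous_iff.mpr <| by convert hf; exact funext fun a => inl_getLeft _ _

end SumProd

theorem ContinuousOn.isClosed_setOf_mem_and_fst_eq {X Y : Type*} [TopologicalSpace X]
    [TopologicalSpace Y] [T2Space X] {f : Y → X} {s : Set Y} (hf : ContinuousOn f s)
    (hs : IsClosed s) : IsClosed {p : X × Y | p.2 ∈ s ∧ p.1 = f p.2} :=
  ((continuous_fst.continuousOn.prodMk (hf.comp continuous_snd.continuousOn fun _ h => h))
    ).preimage_isClosed_of_isClosed (hs.preimage continuous_snd) isClosed_diagonal

theorem isClosed_setOf_forall_mem_succ {X : Type*} [TopologicalSpace X] {K : Set (X × X)}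
    (hK : IsClosed K) : IsClosed {x : ℕ → X | ∀ n, (x n, x (n + 1)) ∈ K} := by
  simp only [ofPred_forall]
  exact isClosed_iInter fun n =>
    hK.preimage ((continuous_apply n).prodMk (continuous_apply (n + 1)))

namespace ReversibleExtension

variable {M : Type*} (Δ : Set M) (α : M → M) (Y : Set M)

def extension : Set (ℕ → M ⊕ Unit) :=
  {x | (∀ n y, x (n + 1) = inl y → y ∈ Δ ∧ x n = inl (α y)) ∧
       (∀ n, x n = inr () → x (n + 1) = inr ()) ∧
       (x 0 ≠ inr ()) ∧
       (∀ n y, x n = inl y → x (n + 1) = inr () → y ∈ Y)}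

def admissiblePairs : Set ((M ⊕ Unit) × (M ⊕ Unit)) :=
  {p | (∀ y, p.2 = inl y → y ∈ Δ ∧ p.1 = inl (α y)) ∧ (p.1 = inr () → p.2 = inr ()) ∧
       (∀ y, p.1 = inl y → p.2 = inr () → y ∈ Y)}

theorem extension_eq : extension Δ α Y =
    {x | ∀ n, (x n, x (n + 1)) ∈ admissiblePairs Δ α Y} ∩ {x | x 0 ≠ inr ()} := by
  ext x
  simp only [extension, admissiblePairs, mem_inter_iff, mem_ofPred_eq, forall_and]
  tauto

open Classical in
noncomputable def preimageStep : M ⊕ Unit → M ⊕ Unit :=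
  Sum.elim (fun z => if h : z ∈ α '' Δ then inl h.choose else inr ()) fun _ => inr ()

noncomputable def backwardOrbit (y : M) (n : ℕ) : M ⊕ Unit :=
  (preimageStep Δ α)^[n] (inl y)

variable {Δ α Y}

theorem backwardOrbit_succ (y : M) (n : ℕ) :
    backwardOrbit Δ α y (n + 1) = preimageStep Δ α (backwardOrbit Δ α y n) :=
  iterate_succ_apply' _ n _

theorem preimageStep_eq_inl {a : M ⊕ Unit} {w : M} (h : preimageStep Δ α a = inl w) :
    w ∈ Δ ∧ a = inl (α w) := by
  rcases a with z | _
  · simp only [preimageStep, elim_inl] at h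
    split_ifs at h with hz
    obtain rfl := inl_injective h
    exact ⟨hz.choose_spec.1, congrArg inl hz.choose_spec.2.symm⟩
  · simp [preimageStep] at h

theorem preimageStep_inl_eq_inr {z : M} (h : preimageStep Δ α (inl z) = inr ()) :
    z ∉ α '' Δ := by
  intro hz
  simp [preimageStep, hz] at h

theorem backwardOrbit_mem_extension (hYc : univ \ α '' Δ ⊆ Y) (y : M) :
    backwardOrbit Δ α y ∈ extension Δ α Y := by
  refine ⟨fun n w h => ?_, fun n h => ?_, by simp [backwardOrbit], fun n z h h' => ?_⟩
  · rw [backwardOrbit_succ] at h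
    exact preimageStep_eq_inl h
  · rw [backwardOrbit_succ, h]
    rfl
  · rw [backwardOrbit_succ, h] at h'
    exact hYc ⟨mem_univ z, preimageStep_inl_eq_inr h'⟩

theorem isLeft_zero_of_mem_extension {x : ℕ → M ⊕ Unit} (hx : x ∈ extension Δ α Y) :
    (x 0).isLeft := by
  cases h : x 0 with
  | inl _ => rfl
  | inr _ => exact absurd h hx.2.2.1

variable [TopologicalSpace M]

theorem isClosed_admissiblePairs [T2Space M] (hΔ : IsClosed Δ) (hα : ContinuousOn α Δ)
    (hY : IsClosed Y) : IsClosed (admissiblePairs Δ α Y) := by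
  apply isClosed_of_isClosed_preimage_prodMap_sum
  · simpa [admissiblePairs] using hα.isClosed_setOf_mem_and_fst_eq hΔ
  · convert hY.preimage (continuous_fst (X := M) (Y := Unit)) using 1
    ext
    simp [admissiblePairs]
  · simp [admissiblePairs]
  · simp [admissiblePairs]

theorem isClosed_extension [T2Space M] (hΔ : IsClosed Δ) (hα : ContinuousOn α Δ)
    (hY : IsClosed Y) : IsClosed (extension Δ α Y) := by
  have hne : IsClosed {a : M ⊕ Unit | a ≠ inr ()} := isClosed_sum_iff.mpr (by simp)
  rw [extension_eq]
  exact (isClosed_setOf_forall_mem_succ (isClosed_admissiblePairs hΔ hα hY)).inter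
    (hne.preimage (continuous_apply 0 : Continuous fun x : ℕ → M ⊕ Unit => x 0))

variable (Δ α Y) in
def projection : C(extension Δ α Y, M) where
  toFun x := ((x : ℕ → M ⊕ Unit) 0).getLeft (isLeft_zero_of_mem_extension x.2)
  continuous_toFun := ((continuous_apply 0).comp continuous_subtype_val).sum_getLeft _

theorem projection_eq_of_zero_eq_inl {x : extension Δ α Y} {y : M}
    (h : (x : ℕ → M ⊕ Unit) 0 = inl y) : projection Δ α Y x = y := by
  simp [projection, h]

theorem projection_surjective (hYc : univ \ α '' Δ ⊆ Y) :
    Surjective (projection Δ α Y) :=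
  fun y => ⟨⟨backwardOrbit Δ α y, backwardOrbit_mem_extension hYc y⟩, rfl⟩

theorem projection_eq_of_shift {x x' : extension Δ α Y}
    (h : ∀ n, (x' : ℕ → M ⊕ Unit) (n + 1) = (x : ℕ → M ⊕ Unit) n) :
    projection Δ α Y x' = α (projection Δ α Y x) := by
  have hx : (x : ℕ → M ⊕ Unit) 0 = inl (projection Δ α Y x) := (inl_getLeft _ _).symm
  exact projection_eq_of_zero_eq_inl (x'.2.1 0 _ ((h 0).trans hx)).2

end ReversibleExtension

theorem stmt13_general {M : Type*} [TopologicalSpace M] [T2Space M]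
    (Δ : Set M) (hΔ : IsClopen Δ) (α : M → M) (hα : ContinuousOn α Δ)
    (Y : Set M) (hY : IsClosed Y) (hYc : Set.univ \ (α '' Δ) ⊆ Y)
    (Mt : Set (ℕ → M ⊕ Unit))
    (hMt : Mt = {x | (∀ n y, x (n + 1) = Sum.inl y → y ∈ Δ ∧ x n = Sum.inl (α y)) ∧
                     (∀ n, x n = Sum.inr () → x (n + 1) = Sum.inr ()) ∧
                     (x 0 ≠ Sum.inr ()) ∧
                     (∀ n y, x n = Sum.inl y → x (n + 1) = Sum.inr () → y ∈ Y)}) :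
    IsClosed Mt ∧
    ∃ Φ : C({x : ℕ → M ⊕ Unit // x ∈ Mt}, M),
      Function.Surjective Φ ∧
      (∀ (x : {x : ℕ → M ⊕ Unit // x ∈ Mt}) (y : M),
          (x : ℕ → M ⊕ Unit) 0 = Sum.inl y → Φ x = y) ∧
      (∀ x x' : {x : ℕ → M ⊕ Unit // x ∈ Mt},
          (∀ n, (x' : ℕ → M ⊕ Unit) (n + 1) = (x : ℕ → M ⊕ Unit) n) →
          Φ x' = α (Φ x)) := by
  subst hMt
  open ReversibleExtension in
  exact ⟨isClosed_extension hΔ.isClosed hα hY, projection Δ α Y, projection_surjective hYc,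
    fun _ _ => projection_eq_of_zero_eq_inl, fun _ _ => projection_eq_of_shift⟩

/-- with `M̃ ⊆ (M ⊕ Unit)^ℕ` the natural reversible extension of `(M, Δ, α)`
associated with a closed set `Y ⊇ M \ α(Δ)` (encoded as in Statement 12), `M̃` is a closed
subset of the product space (hence compact), and the zeroth-coordinate projection
`Φ(x₀,x₁,…) = x₀` is a continuous surjection `M̃ → M` satisfying `Φ(α̃ x) = α(Φ x)` whenever
`x` is in the domain of `α̃` (i.e. whenever the shift `α̃ x` exists in `M̃`). -/
theorem stmt13 {M : Type*} [TopologicalSpace M] [CompactSpace M] [T2Space M]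
    (Δ : Set M) (hΔ : IsClopen Δ) (α : M → M) (hα : ContinuousOn α Δ)
    (Y : Set M) (hY : IsClosed Y) (hYc : Set.univ \ (α '' Δ) ⊆ Y)
    (Mt : Set (ℕ → M ⊕ Unit))
    (hMt : Mt = {x | (∀ n y, x (n + 1) = Sum.inl y → y ∈ Δ ∧ x n = Sum.inl (α y)) ∧
                     (∀ n, x n = Sum.inr () → x (n + 1) = Sum.inr ()) ∧
                     (x 0 ≠ Sum.inr ()) ∧
                     (∀ n y, x n = Sum.inl y → x (n + 1) = Sum.inr () → y ∈ Y)}) :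
    IsClosed Mt ∧
    ∃ Φ : C({x : ℕ → M ⊕ Unit // x ∈ Mt}, M),
      Function.Surjective Φ ∧
      (∀ (x : {x : ℕ → M ⊕ Unit // x ∈ Mt}) (y : M),
          (x : ℕ → M ⊕ Unit) 0 = Sum.inl y → Φ x = y) ∧
      (∀ x x' : {x : ℕ → M ⊕ Unit // x ∈ Mt},
          (∀ n, (x' : ℕ → M ⊕ Unit) (n + 1) = (x : ℕ → M ⊕ Unit) n) →
          Φ x' = α (Φ x)) :=
  stmt13_general Δ hΔ α hα Y hY hYc Mt hMt
end

section
/- For every λ ∈ (0, 1) there exists n₀ ∈ ℕ such that the n₀-th iterate of the logistic map satisfies α_λ^{n₀}([λ, 1]) = [0, λ], where α_λ(x) = 4λx(1-x). -/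
/-!
Write `f = α_λ`. Since `f (1 - x) = f x`, the image `f [λ, 1]` equals `f [0, 1 - λ]`, and `f` maps
`[0, b]` onto `[0, f b]` for `b ≤ 1/2` and onto `[0, λ]` for `1/2 ≤ b ≤ 1`. If `λ ≤ 1/2` one step
suffices. If `λ > 1/2`, then `f x ≥ 2λ x` on `[0, 1/2]`, so the right endpoints of the intervals
`f^[n] [0, 1 - λ] = [0, f^[n] (1 - λ)]` grow geometrically until one passes `1/2`; one more step
gives `[0, λ]`.
-/

open Set

def logisticMap (lam : ℝ) (x : ℝ) : ℝ := 4 * lam * x * (1 - x)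

namespace logisticMap

variable {lam : ℝ}

theorem continuous (lam : ℝ) : Continuous (logisticMap lam) := by
  unfold logisticMap; fun_prop

theorem apply_zero (lam : ℝ) : logisticMap lam 0 = 0 := by simp [logisticMap]

theorem apply_half (lam : ℝ) : logisticMap lam (1 / 2) = lam := by norm_num [logisticMap]; ring

theorem apply_one_sub (lam x : ℝ) : logisticMap lam (1 - x) = logisticMap lam x := by
  unfold logisticMap; ring

theorem apply_le (hlam : 0 ≤ lam) (x : ℝ) : logisticMap lam x ≤ lam := by
  unfold logisticMap; nlinarith [mul_nonneg hlam (sq_nonneg (1 - 2 * x))]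

theorem apply_nonneg (hlam : 0 ≤ lam) {x : ℝ} (hx0 : 0 ≤ x) (hx1 : x ≤ 1) :
    0 ≤ logisticMap lam x := by
  unfold logisticMap; have := sub_nonneg.2 hx1; positivity

theorem two_mul_mul_le_apply (hlam : 0 ≤ lam) {x : ℝ} (hx0 : 0 ≤ x) (hx : x ≤ 1 / 2) :
    2 * lam * x ≤ logisticMap lam x := by
  unfold logisticMap; nlinarith [mul_nonneg hlam hx0]

theorem monotoneOn_Iic_half (hlam : 0 ≤ lam) : MonotoneOn (logisticMap lam) (Iic (1 / 2)) := by
  intro x (hx : x ≤ 1 / 2) y (hy : y ≤ 1 / 2) hxy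
  have key : logisticMap lam y - logisticMap lam x = 4 * lam * (y - x) * (1 - x - y) := by
    unfold logisticMap; ring
  have : 0 ≤ 4 * lam * (y - x) * (1 - x - y) :=
    mul_nonneg (mul_nonneg (by positivity) (sub_nonneg.2 hxy)) (by linarith)
  linarith

theorem image_Icc_zero_of_le_half (hlam : 0 ≤ lam) {b : ℝ} (hb0 : 0 ≤ b) (hb : b ≤ 1 / 2) :
    logisticMap lam '' Icc 0 b = Icc 0 (logisticMap lam b) := by
  rw [(continuous lam).continuousOn.image_Icc_of_monotoneOn hb0
    ((monotoneOn_Iic_half hlam).mono fun x hx => hx.2.trans hb), apply_zero]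

theorem image_Icc_zero_of_half_le (hlam : 0 ≤ lam) {b : ℝ} (hb : 1 / 2 ≤ b) (hb1 : b ≤ 1) :
    logisticMap lam '' Icc 0 b = Icc 0 lam := by
  refine (image_subset_iff.2 fun x hx => ?_).antisymm ?_
  · exact ⟨apply_nonneg hlam hx.1 (hx.2.trans hb1), apply_le hlam x⟩
  · calc Icc 0 lam = logisticMap lam '' Icc 0 (1 / 2) := by
          rw [image_Icc_zero_of_le_half hlam (by norm_num) le_rfl, apply_half]
      _ ⊆ logisticMap lam '' Icc 0 b := image_mono (Icc_subset_Icc_right hb)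

theorem image_Icc_one (lam c : ℝ) :
    logisticMap lam '' Icc c 1 = logisticMap lam '' Icc 0 (1 - c) := by
  rw [← sub_self (1 : ℝ), ← sub_sub_cancel 1 c, ← image_const_sub_Icc, image_image,
    sub_sub_cancel]
  simp only [apply_one_sub]

theorem exists_iterate_succ_image_Icc_zero (hlam : 1 / 2 < lam) (hlam1 : lam ≤ 1) {b : ℝ}
    (hb0 : 0 < b) (hb1 : b ≤ 1) :
    ∃ m : ℕ, (logisticMap lam)^[m + 1] '' Icc 0 b = Icc 0 lam := by
  have hlam0 : 0 ≤ lam := by linarith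
  obtain ⟨n, hn⟩ : ∃ n : ℕ, 1 / 2 ≤ (2 * lam) ^ n * b := by
    obtain ⟨n, hn⟩ := pow_unbounded_of_one_lt (1 / (2 * b)) (by linarith : (1 : ℝ) < 2 * lam)
    exact ⟨n, by rw [div_lt_iff₀ (by positivity)] at hn; linarith⟩
  induction n generalizing b with
  | zero =>
    exact ⟨0, image_Icc_zero_of_half_le hlam0 (by simpa using hn) hb1⟩
  | succ n ih =>
    rcases le_or_gt (1 / 2) b with hb | hb
    · exact ⟨0, image_Icc_zero_of_half_le hlam0 hb hb1⟩
    have hgrow := two_mul_mul_le_apply hlam0 hb0.le hb.le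
    have hfb_pos : 0 < logisticMap lam b := (by positivity : 0 < 2 * lam * b).trans_le hgrow
    obtain ⟨m, hm⟩ := ih hfb_pos ((apply_le hlam0 b).trans hlam1) <|
      calc 1 / 2 ≤ (2 * lam) ^ (n + 1) * b := hn
        _ = (2 * lam) ^ n * (2 * lam * b) := by ring
        _ ≤ (2 * lam) ^ n * logisticMap lam b := by gcongr
    refine ⟨m + 1, ?_⟩
    rw [Function.iterate_succ, image_comp, image_Icc_zero_of_le_half hlam0 hb0.le hb.le, hm]

end logisticMap

open logisticMap in
/-- for every `0 < λ < 1` there is `n₀ ∈ ℕ` with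
`α_λ^{n₀}([λ,1]) = [0,λ]`, where `α_λ(x) = 4λx(1-x)` is the logistic map. -/
theorem stmt16 (lam : ℝ) (h0 : 0 < lam) (h1 : lam < 1) :
    ∃ n0 : ℕ, (fun x : ℝ => 4 * lam * x * (1 - x))^[n0] '' Set.Icc lam 1 = Set.Icc 0 lam := by
  change ∃ n0 : ℕ, (logisticMap lam)^[n0] '' Icc lam 1 = Icc 0 lam
  rcases le_or_gt lam (1 / 2) with hle | hlt
  · refine ⟨1, ?_⟩
    rw [Function.iterate_one, image_Icc_one,
      image_Icc_zero_of_half_le h0.le (by linarith) (by linarith)]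
  · obtain ⟨m, hm⟩ := exists_iterate_succ_image_Icc_zero hlt h1.le (sub_pos.2 h1) (by linarith)
    refine ⟨m + 1, ?_⟩
    rw [Function.iterate_succ, image_comp, image_Icc_one, ← image_comp, ← Function.iterate_succ,
      hm]
end

section
/- Let γ : ℝ → ℝ be an increasing homeomorphism satisfying γ(t+1) = γ(t) + 1 (a lift of an orientation-preserving circle homeomorphism). Then for every t ∈ ℝ the limit lim_{n→∞} γⁿ(t)/n exists and is independent of t. -/
/-- for an increasing homeomorphism `γ : ℝ → ℝ` with `γ(t+1) = γ(t) + 1` (a lift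
of an orientation-preserving circle homeomorphism), the limit `lim_{n→∞} γⁿ(t)/n` exists and
is independent of `t`. -/
theorem stmt18 (γ : ℝ → ℝ) (hcont : Continuous γ) (hmono : StrictMono γ)
    (hsurj : Function.Surjective γ) (hper : ∀ t, γ (t + 1) = γ t + 1) :
    ∃ τ : ℝ, ∀ t : ℝ,
      Filter.Tendsto (fun n : ℕ => γ^[n] t / n) Filter.atTop (nhds τ) := by
  set f : CircleDeg1Lift := ⟨⟨γ, hmono.monotone⟩, hper⟩
  refine ⟨f.translationNumber, fun t => ?_⟩
  have h := f.tendsto_translationNumber t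
  have h2 : Filter.Tendsto (fun n : ℕ => t / n) Filter.atTop (nhds 0) :=
    Filter.Tendsto.div_atTop tendsto_const_nhds tendsto_natCast_atTop_atTop
  have := h.add h2
  simp only [sub_div] at this
  rw [add_zero] at this
  refine this.congr fun n => ?_
  show (f ^ n) t / n - t / n + t / n = γ^[n] t / n
  rw [sub_add_cancel, CircleDeg1Lift.coe_pow]
  rfl
end
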